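/- For 1 ≤ n ≤ m−1, the Chevalley–Weil signature f_n = −1 + Σ_{i=1}^N ⟨−n·a_i/m⟩ satisfies Σ_{n=1}^{m−1} f_n = 1 + ((N−2)m − Σ_{i=1}^N gcd(a_i, m))/2, i.e., the signatures sum to the genus, where ⟨q⟩ denotes the fractional part of a rational number q. -/

import Mathlib

/-!
The identity splits over the indices `i`: it suffices that, with `d = gcd(a, m)`,
`∑_{n=1}^{m-1} ⟨-na/m⟩ = (m - d)/2`. Reflecting `n ↦ m - n` turns this sum into
`∑ ⟨na/m⟩`, and `⟨x⟩ + ⟨-x⟩` is `1` unless `x` is an integer. Since `m ∣ na` exactly when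
`m/d ∣ n`, exactly `d - 1` of the `n` are exceptional, so twice the sum is `(m - 1) - (d - 1)`.
-/

open Finset

theorem Nat.dvd_mul_iff_div_gcd_dvd {m : ℕ} (hm : 0 < m) (a n : ℕ) :
    m ∣ n * a ↔ m / a.gcd m ∣ n := by
  have hd : 0 < a.gcd m := Nat.gcd_pos_of_pos_right a hm
  have hcop := Nat.coprime_div_gcd_div_gcd hd
  obtain ⟨b, hb⟩ := Nat.gcd_dvd_left a m
  obtain ⟨k, hk⟩ := Nat.gcd_dvd_right a m
  set d := a.gcd m
  rw [hb, Nat.mul_div_cancel_left _ hd] at hcop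
  rw [hk, Nat.mul_div_cancel_left _ hd] at hcop ⊢
  rw [hb, mul_left_comm, Nat.mul_dvd_mul_iff_left hd, hcop.symm.dvd_mul_right]

theorem Nat.mul_sub_one_div_right {d k : ℕ} (hd : 0 < d) (hk : 0 < k) :
    (d * k - 1) / k = d - 1 := by
  have hkd : k ≤ d * k := Nat.le_mul_of_pos_left k hd
  refine Nat.div_eq_of_lt_le ?_ ?_
  · rw [Nat.sub_one_mul]; omega
  · rw [Nat.sub_add_cancel hd]; omega

theorem Nat.card_filter_dvd_mul_Icc {m : ℕ} (hm : 0 < m) (a : ℕ) :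
    #{n ∈ Icc 1 (m - 1) | m ∣ n * a} = a.gcd m - 1 := by
  have hd : 0 < a.gcd m := Nat.gcd_pos_of_pos_right a hm
  obtain ⟨k, hk⟩ := Nat.gcd_dvd_right a m
  have hk0 : 0 < k := Nat.pos_of_mul_pos_left (hk ▸ hm)
  have hmk : m / a.gcd m = k := Nat.div_eq_of_eq_mul_left hd (hk.trans (mul_comm _ _))
  simp_rw [Nat.dvd_mul_iff_div_gcd_dvd hm, hmk]
  rw [show Icc 1 (m - 1) = Ioc 0 (m - 1) from Icc_add_one_left_eq_Ioc 0 _,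
    Nat.Ioc_filter_dvd_card_eq_div]
  conv_lhs => rw [hk]
  exact Nat.mul_sub_one_div_right hd hk0

theorem Int.fract_add_fract_neg {R : Type*} [Ring R] [LinearOrder R] [FloorRing R]
    [IsOrderedRing R] (x : R) : fract x + fract (-x) = if fract x = 0 then 0 else 1 := by
  split_ifs with hx
  · rw [hx, fract_neg_eq_zero.mpr hx, add_zero]
  · rw [fract_neg hx, add_sub_cancel]

theorem Finset.sum_Icc_one_sub_reflect {M : Type*} [AddCommMonoid M] (f : ℕ → M) (m : ℕ) :
    ∑ n ∈ Icc 1 (m - 1), f (m - n) = ∑ n ∈ Icc 1 (m - 1), f n :=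
  have hrefl : ∀ n ∈ Icc 1 (m - 1), m - n ∈ Icc 1 (m - 1) ∧ m - (m - n) = n := by
    intro n hn
    rw [mem_Icc] at hn ⊢
    omega
  sum_nbij' (m - ·) (m - ·) (fun n hn => (hrefl n hn).1) (fun n hn => (hrefl n hn).1)
    (fun n hn => (hrefl n hn).2) (fun n hn => (hrefl n hn).2) (fun _ _ => rfl)

section FloorField

variable {K : Type*} [Field K] [LinearOrder K] [IsOrderedRing K] [FloorRing K]

theorem Int.fract_natCast_div_eq_zero_iff {m : ℕ} (hm : 0 < m) (k : ℕ) :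
    fract ((k : K) / m) = 0 ↔ m ∣ k := by
  simp [fract_div_natCast_eq_div_natCast_mod, hm.ne', Nat.dvd_iff_mod_eq_zero]

theorem sum_Icc_fract_neg_mul_div_eq_sum_fract_mul_div (m a : ℕ) :
    ∑ n ∈ Icc 1 (m - 1), Int.fract (-((n : K) * a) / m) =
      ∑ n ∈ Icc 1 (m - 1), Int.fract ((n : K) * a / m) := by
  refine (sum_congr rfl fun n hn => ?_).trans
    (sum_Icc_one_sub_reflect (fun n : ℕ => Int.fract ((n : K) * a / m)) m)
  have hnm : n < m := by simp only [mem_Icc] at hn; omega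
  have hm : (m : K) ≠ 0 := by exact_mod_cast (by omega : m ≠ 0)
  rw [neg_div, ← Int.fract_add_natCast _ a, Nat.cast_sub hnm.le, sub_mul, sub_div,
    mul_div_cancel_left₀ _ hm, neg_add_eq_sub]

theorem sum_Icc_fract_neg_mul_div {m : ℕ} (hm : 0 < m) (a : ℕ) :
    ∑ n ∈ Icc 1 (m - 1), Int.fract (-((n : K) * a) / m) = ((m : K) - a.gcd m) / 2 := by
  have hd : 0 < a.gcd m := Nat.gcd_pos_of_pos_right a hm
  have hpair (n : ℕ) : Int.fract ((n : K) * a / m) + Int.fract (-((n : K) * a) / m) =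
      1 - if m ∣ n * a then 1 else 0 := by
    rw [neg_div, Int.fract_add_fract_neg, ← Nat.cast_mul]
    simp only [Int.fract_natCast_div_eq_zero_iff hm]
    split_ifs <;> norm_num
  rw [eq_div_iff two_ne_zero, mul_two]
  nth_rw 1 [sum_Icc_fract_neg_mul_div_eq_sum_fract_mul_div]
  rw [← sum_add_distrib, sum_congr rfl fun n _ => hpair n, sum_sub_distrib, sum_boole,
    Nat.card_filter_dvd_mul_Icc hm, sum_const, Nat.card_Icc, Nat.add_sub_cancel, nsmul_one,
    Nat.cast_sub hm, Nat.cast_sub hd, Nat.cast_one]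
  ring

end FloorField

theorem sum_ChevalleyWeil_signature_eq_genus_general (m N : ℕ) (hm : 2 ≤ m)
    (a : Fin N → ℕ) :
    ∑ n ∈ Finset.Icc 1 (m - 1),
        (-1 + ∑ i, Int.fract (-((n : ℚ) * (a i : ℚ)) / (m : ℚ)))
      = 1 + (((N : ℚ) - 2) * (m : ℚ) - ∑ i, (Nat.gcd (a i) m : ℚ)) / 2 := by
  rw [sum_add_distrib, sum_comm,
    sum_congr rfl fun i _ => sum_Icc_fract_neg_mul_div (by omega) (a i), ← sum_div,
    sum_sub_distrib, sum_const, sum_const, card_univ, Fintype.card_fin, Nat.card_Icc,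
    Nat.add_sub_cancel, nsmul_eq_mul, nsmul_eq_mul, Nat.cast_sub (by omega : 1 ≤ m)]
  ring

/-- The Chevalley–Weil signatures `f_n = −1 + Σᵢ ⟨−n·aᵢ/m⟩` (for `1 ≤ n ≤ m−1`) sum to the
genus `g = 1 + ((N−2)m − Σᵢ gcd(aᵢ,m))/2`, where `⟨q⟩` is the fractional part of `q`. -/
theorem sum_ChevalleyWeil_signature_eq_genus (m N : ℕ) (hm : 2 ≤ m) (hN : 2 ≤ N)
    (a : Fin N → ℕ) (ha : ∀ i, 1 ≤ a i ∧ a i ≤ m - 1)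
    (hsum : m ∣ ∑ i, a i) :
    ∑ n ∈ Finset.Icc 1 (m - 1),
        (-1 + ∑ i, Int.fract (-((n : ℚ) * (a i : ℚ)) / (m : ℚ)))
      = 1 + (((N : ℚ) - 2) * (m : ℚ) - ∑ i, (Nat.gcd (a i) m : ℚ)) / 2 :=
  sum_ChevalleyWeil_signature_eq_genus_general m N hm a
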